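/- Let B, Y ∈ ℂ^{p×q}, with Y = U Σ V^H a singular value decomposition where Σ has diagonal entries σ₁ ≥ ... ≥ σ_min(p,q) ≥ 0, and let B have singular values β₁ ≥ ... ≥ β_min(p,q) ≥ 0. Then Re(tr(B^H Y)) ≤ Σ_i β_i σ_i. -/

import Mathlib

/-!
Write `X i j = ⟪u i, u' j⟫` and `W i j = ⟪v' j, v i⟫` for the Gram matrices of the left and right
singular vectors of `B` and `Y`. Then `Re tr(Bᴴ Y) = Re ∑ β i σ j X i j W i j`, and
`Re (X i j W i j) ≤ D i j := (‖X i j‖² + ‖W i j‖²) / 2`. By Bessel's inequality all row and column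
sums of `D` are at most `1`, and for such a doubly substochastic `D` and decreasing nonnegative
`β`, `σ` one has `∑ β i σ j D i j ≤ ∑ β i σ i`: by Abel summation it suffices to dominate the
partial sums of `i ↦ ∑ j D i j σ j` by those of `σ`, which is a fractional knapsack bound.
-/

open Finset ComplexConjugate

theorem Fin.sum_mul_nonpos_of_antitone_of_prefix_sum_nonpos {n : ℕ} {f d : Fin n → ℝ}
    (hf : Antitone f) (hf₀ : ∀ i, 0 ≤ f i) (hd : ∀ k, ∑ i with i ≤ k, d i ≤ 0) :
    ∑ i, f i * d i ≤ 0 := by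
  induction n with
  | zero => simp
  | succ n ih =>
    have hprefix : ∀ k : Fin n, ∑ i with i ≤ k, d (Fin.castSucc i) ≤ 0 := fun k => by
      simpa [sum_filter, Fin.sum_univ_castSucc, Fin.castSucc_lt_last]
        using hd (Fin.castSucc k)
    have hlast : f (Fin.last n) * ∑ i, d i ≤ 0 :=
      mul_nonpos_of_nonneg_of_nonpos (hf₀ _) (by simpa [Fin.le_last] using hd (Fin.last n))
    have hrest : ∑ i : Fin n, (f (Fin.castSucc i) - f (Fin.last n)) * d (Fin.castSucc i) ≤ 0 :=
      ih (fun i j hij => by simpa using hf (Fin.castSucc_le_castSucc_iff.2 hij))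
        (fun i => sub_nonneg.2 (hf (Fin.le_last _))) hprefix
    calc ∑ i, f i * d i
        = ∑ i : Fin n, (f (Fin.castSucc i) - f (Fin.last n)) * d (Fin.castSucc i)
          + f (Fin.last n) * ∑ i, d i := by
          simp only [Fin.sum_univ_castSucc, sub_mul, sum_sub_distrib, mul_add, mul_sum]
          ring
      _ ≤ 0 := add_nonpos hrest hlast

theorem Fin.sum_mul_le_sum_mul_of_prefix_sum_le {n : ℕ} {f g h : Fin n → ℝ}
    (hf : Antitone f) (hf₀ : ∀ i, 0 ≤ f i)
    (hgh : ∀ k, ∑ i with i ≤ k, g i ≤ ∑ i with i ≤ k, h i) :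
    ∑ i, f i * g i ≤ ∑ i, f i * h i := by
  have := Fin.sum_mul_nonpos_of_antitone_of_prefix_sum_nonpos (d := g - h) hf hf₀
    fun k => by simpa [sum_sub_distrib] using hgh k
  simpa [mul_sub, sum_sub_distrib] using this

/-- Fractional knapsack: the weights are best spent on the largest values. -/
theorem Fin.sum_mul_le_sum_filter_le_of_sum_le_card {n : ℕ} {σ c : Fin n → ℝ}
    (hσ : Antitone σ) (hσ₀ : ∀ i, 0 ≤ σ i) (hc₀ : ∀ j, 0 ≤ c j) (hc₁ : ∀ j, c j ≤ 1)
    (k : Fin n) (hc : ∑ j, c j ≤ #{j | j ≤ k}) :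
    ∑ j, σ j * c j ≤ ∑ j with j ≤ k, σ j := by
  have hind : ∑ j with j ≤ k, σ j = ∑ j, σ j * if j ≤ k then 1 else 0 := by
    simp_rw [mul_boole, sum_filter]
  rw [hind]
  refine Fin.sum_mul_le_sum_mul_of_prefix_sum_le hσ hσ₀ fun m => ?_
  rw [sum_boole, filter_filter]
  have hcm : ∑ j with j ≤ m, c j ≤ #{j | j ≤ m} := by
    simpa using sum_le_sum fun j (_ : j ∈ ({j | j ≤ m} : Finset _)) => hc₁ j
  have hck : ∑ j with j ≤ m, c j ≤ #{j | j ≤ k} :=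
    (sum_le_univ_sum_of_nonneg hc₀).trans hc
  rcases le_total m k with hmk | hkm
  · rwa [filter_congr fun j _ => and_iff_left_of_imp fun hj => hj.trans hmk]
  · rwa [filter_congr fun j _ => and_iff_right_of_imp fun hj => hj.trans hkm]

theorem Fin.sum_sum_mul_le_of_substochastic {n : ℕ} {β σ : Fin n → ℝ}
    (hβ : Antitone β) (hβ₀ : ∀ i, 0 ≤ β i) (hσ : Antitone σ) (hσ₀ : ∀ i, 0 ≤ σ i)
    {D : Fin n → Fin n → ℝ} (hD₀ : ∀ i j, 0 ≤ D i j)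
    (hrow : ∀ i, ∑ j, D i j ≤ 1) (hcol : ∀ j, ∑ i, D i j ≤ 1) :
    ∑ i, ∑ j, β i * σ j * D i j ≤ ∑ i, β i * σ i := by
  simp_rw [mul_assoc, ← mul_sum]
  refine Fin.sum_mul_le_sum_mul_of_prefix_sum_le hβ hβ₀ fun k => ?_
  have hswap : ∑ i with i ≤ k, ∑ j, σ j * D i j = ∑ j, σ j * ∑ i with i ≤ k, D i j := by
    rw [sum_comm]; simp_rw [mul_sum]
  rw [hswap]
  refine Fin.sum_mul_le_sum_filter_le_of_sum_le_card hσ hσ₀ (fun j => sum_nonneg fun i _ => hD₀ i j)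
    (fun j => (sum_le_univ_sum_of_nonneg (hD₀ · j)).trans (hcol j)) k ?_
  rw [sum_comm]
  simpa using sum_le_sum fun i (_ : i ∈ ({i | i ≤ k} : Finset _)) => hrow i

theorem Fin.re_sum_sum_mul_le_of_sum_norm_sq_le_one {𝕜 : Type*} [RCLike 𝕜] {n : ℕ}
    {β σ : Fin n → ℝ}
    (hβ : Antitone β) (hβ₀ : ∀ i, 0 ≤ β i) (hσ : Antitone σ) (hσ₀ : ∀ i, 0 ≤ σ i)
    {X W : Fin n → Fin n → 𝕜}
    (hXrow : ∀ i, ∑ j, ‖X i j‖ ^ 2 ≤ 1) (hXcol : ∀ j, ∑ i, ‖X i j‖ ^ 2 ≤ 1)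
    (hWrow : ∀ i, ∑ j, ‖W i j‖ ^ 2 ≤ 1) (hWcol : ∀ j, ∑ i, ‖W i j‖ ^ 2 ≤ 1) :
    RCLike.re (∑ i, ∑ j, (β i : 𝕜) * σ j * (X i j * W i j)) ≤ ∑ i, β i * σ i := by
  set D : Fin n → Fin n → ℝ := fun i j => (‖X i j‖ ^ 2 + ‖W i j‖ ^ 2) / 2
  have hterm : ∀ i j, RCLike.re ((β i : 𝕜) * σ j * (X i j * W i j)) ≤ β i * σ j * D i j := by
    intro i j
    rw [← RCLike.ofReal_mul, RCLike.re_ofReal_mul]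
    gcongr
    · exact mul_nonneg (hβ₀ i) (hσ₀ j)
    calc RCLike.re (X i j * W i j) ≤ ‖X i j * W i j‖ := RCLike.re_le_norm _
      _ = ‖X i j‖ * ‖W i j‖ := norm_mul _ _
      _ ≤ (‖X i j‖ ^ 2 + ‖W i j‖ ^ 2) / 2 := by linarith [two_mul_le_add_sq ‖X i j‖ ‖W i j‖]
  calc RCLike.re (∑ i, ∑ j, (β i : 𝕜) * σ j * (X i j * W i j))
      = ∑ i, ∑ j, RCLike.re ((β i : 𝕜) * σ j * (X i j * W i j)) := by simp only [map_sum]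
    _ ≤ ∑ i, ∑ j, β i * σ j * D i j := sum_le_sum fun i _ => sum_le_sum fun j _ => hterm i j
    _ ≤ ∑ i, β i * σ i := by
      refine Fin.sum_sum_mul_le_of_substochastic hβ hβ₀ hσ hσ₀ (fun i j => by positivity)
        (fun i => ?_) (fun j => ?_)
      · rw [← sum_div, sum_add_distrib]; linarith [hXrow i, hWrow i]
      · rw [← sum_div, sum_add_distrib]; linarith [hXcol j, hWcol j]

theorem Orthonormal.re_sum_sum_mul_inner_mul_inner_le {𝕜 E F : Type*} [RCLike 𝕜]
    [NormedAddCommGroup E] [InnerProductSpace 𝕜 E] [NormedAddCommGroup F] [InnerProductSpace 𝕜 F]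
    {n : ℕ} {β σ : Fin n → ℝ}
    (hβ : Antitone β) (hβ₀ : ∀ i, 0 ≤ β i) (hσ : Antitone σ) (hσ₀ : ∀ i, 0 ≤ σ i)
    {u u' : Fin n → E} {v v' : Fin n → F} (hu : Orthonormal 𝕜 u) (hu' : Orthonormal 𝕜 u')
    (hv : Orthonormal 𝕜 v) (hv' : Orthonormal 𝕜 v') :
    RCLike.re (∑ i, ∑ j, (β i : 𝕜) * σ j * (inner 𝕜 (u i) (u' j) * inner 𝕜 (v' j) (v i)))
      ≤ ∑ i, β i * σ i :=
  Fin.re_sum_sum_mul_le_of_sum_norm_sq_le_one hβ hβ₀ hσ hσ₀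
    (fun i => by simpa [norm_inner_symm, hu.1 i] using hu'.sum_inner_products_le (u i))
    (fun j => by simpa [hu'.1 j] using hu.sum_inner_products_le (u' j))
    (fun i => by simpa [hv.1 i] using hv'.sum_inner_products_le (v i))
    (fun j => by simpa [norm_inner_symm, hv'.1 j] using hv.sum_inner_products_le (v' j))

theorem EuclideanSpace.inner_toLp_toLp_eq_sum_conj_mul {𝕜 κ : Type*} [RCLike 𝕜] [Fintype κ]
    (x y : κ → 𝕜) :
    inner 𝕜 (WithLp.toLp 2 x : EuclideanSpace 𝕜 κ) (WithLp.toLp 2 y) = ∑ a, conj (x a) * y a := by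
  simp [EuclideanSpace.inner_toLp_toLp, dotProduct, mul_comm]

theorem orthonormal_toLp_of_sum_conj_mul {𝕜 ι κ : Type*} [RCLike 𝕜] [Fintype κ] [DecidableEq ι]
    {u : ι → κ → 𝕜} (hu : ∀ i i', ∑ a, conj (u i a) * u i' a = if i = i' then 1 else 0) :
    Orthonormal 𝕜 fun i => (WithLp.toLp 2 (u i) : EuclideanSpace 𝕜 κ) :=
  orthonormal_iff_ite.2 fun i i' => by rw [EuclideanSpace.inner_toLp_toLp_eq_sum_conj_mul, hu]

theorem sum_sum_conj_mul_sum_eq {ι κ μ : Type*} [Fintype ι] [Fintype κ] [Fintype μ]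
    (β σ : ι → ℝ) (u u' : ι → κ → ℂ) (v v' : ι → μ → ℂ) :
    ∑ a, ∑ b, conj (∑ i, (β i : ℂ) * u i a * conj (v i b)) *
        ∑ j, (σ j : ℂ) * u' j a * conj (v' j b)
      = ∑ i, ∑ j, (β i : ℂ) * σ j * ((∑ a, conj (u i a) * u' j a) * ∑ b, conj (v' j b) * v i b) := by
  simp only [map_sum, map_mul, Complex.conj_ofReal, Complex.conj_conj, sum_mul, mul_sum]
  -- the index types are distinct, so these rewrites move `a` and `b` inwards and cannot loop
  simp_rw [sum_comm (γ := μ) (α := ι), sum_comm (γ := κ) (α := ι), sum_comm (γ := κ) (α := μ)]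
  rw [sum_comm]
  refine sum_congr rfl fun i _ => sum_congr rfl fun j _ => sum_congr rfl fun a _ =>
    sum_congr rfl fun b _ => by ring

/-- von Neumann trace inequality: Re(tr(Bᴴ Y)) ≤ Σ_i β_i σ_i, where β_i and
σ_i are the (decreasingly ordered, nonnegative) singular values of B and Y. -/
theorem stmt17 (p q : ℕ)
    (uB : Fin (min p q) → Fin p → ℂ) (vB : Fin (min p q) → Fin q → ℂ)
    (huB : ∀ i i', ∑ a, (starRingEnd ℂ) (uB i a) * uB i' a = if i = i' then 1 else 0)
    (hvB : ∀ i i', ∑ b, (starRingEnd ℂ) (vB i b) * vB i' b = if i = i' then 1 else 0)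
    (uY : Fin (min p q) → Fin p → ℂ) (vY : Fin (min p q) → Fin q → ℂ)
    (huY : ∀ i i', ∑ a, (starRingEnd ℂ) (uY i a) * uY i' a = if i = i' then 1 else 0)
    (hvY : ∀ i i', ∑ b, (starRingEnd ℂ) (vY i b) * vY i' b = if i = i' then 1 else 0)
    (β σ : Fin (min p q) → ℝ)
    (hβdec : ∀ i j, i ≤ j → β j ≤ β i) (hβnn : ∀ i, 0 ≤ β i)
    (hσdec : ∀ i j, i ≤ j → σ j ≤ σ i) (hσnn : ∀ i, 0 ≤ σ i)
    (B Y : Matrix (Fin p) (Fin q) ℂ)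
    (hB : B = fun a b => ∑ i, (β i : ℂ) * uB i a * (starRingEnd ℂ) (vB i b))
    (hY : Y = fun a b => ∑ i, (σ i : ℂ) * uY i a * (starRingEnd ℂ) (vY i b)) :
    (∑ a, ∑ b, (starRingEnd ℂ) (B a b) * Y a b).re ≤ ∑ i, β i * σ i := by
  subst hB hY
  rw [sum_sum_conj_mul_sum_eq]
  simp_rw [← EuclideanSpace.inner_toLp_toLp_eq_sum_conj_mul]
  exact Orthonormal.re_sum_sum_mul_inner_mul_inner_le hβdec hβnn hσdec hσnn
    (orthonormal_toLp_of_sum_conj_mul huB) (orthonormal_toLp_of_sum_conj_mul huY)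
    (orthonormal_toLp_of_sum_conj_mul hvB) (orthonormal_toLp_of_sum_conj_mul hvY)
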